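/- arXiv:1906.09822 — 2 statements merged into one kernel-verified Lean document; each statement's English description precedes it below -/
import Mathlib

section
/- The square of the h-index, i.e. f(x) = h(x)², where h(x) is the largest h with x_h ≥ h, satisfies monotonicity and uniform equivalence but does not satisfy uniform citation. -/
/-- A citation vector: a finite nonincreasing list of positive integers. -/
def CitVec (x : List ℕ) : Prop :=
  (∀ a ∈ x, 0 < a) ∧ List.Pairwise (· ≥ ·) x

/-- The rec-index: max over 1 ≤ i ≤ n of i·x_i (0 for the empty vector). -/
def recIdx (x : List ℕ) : ℕ :=
  ((List.range x.length).map (fun i => (i + 1) * x.getD i 0)).foldr max 0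

/-- Domination: u ⊑ x. -/
def Dom (u x : List ℕ) : Prop :=
  u.length ≤ x.length ∧ ∀ i < u.length, u.getD i 0 ≤ x.getD i 0

/-- Uniform: all entries equal. -/
def Uniform (x : List ℕ) : Prop := ∀ a ∈ x, ∀ b ∈ x, a = b

/-- x^[k]: add one citation to publication k (1-indexed; append a 1 if k = n+1). -/
def incr (x : List ℕ) (k : ℕ) : List ℕ :=
  if k ≤ x.length then x.set (k - 1) (x.getD (k - 1) 0 + 1) else x ++ [1]

/-- k is the smallest index j with x_j = x_k (taking x_{n+1} = 0);
equivalently all earlier entries are strictly larger. -/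
def MinIndex (x : List ℕ) (k : ℕ) : Prop :=
  1 ≤ k ∧ k ≤ x.length + 1 ∧ ∀ j, 1 ≤ j → j < k → x.getD (k - 1) 0 < x.getD (j - 1) 0

/-- The h-index: the largest h with x_h ≥ h. -/
def hIdx (x : List ℕ) : ℕ :=
  Nat.findGreatest (fun h => h ≤ x.getD (h - 1) 0) x.length

/-! The h-index is monotone under domination, and a vector with h-index `h` dominates the
`h × h` square `⟨h, …, h⟩`, whose h-index is again `h`; hence `h²` is monotone and uniformly
equivalent. It is not uniform citation since `⟨3⟩` has h-index `1` but `3` citations. -/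

lemma hIdx_le_length (x : List ℕ) : hIdx x ≤ x.length := Nat.findGreatest_le _

lemma hIdx_le_getD (x : List ℕ) : hIdx x ≤ x.getD (hIdx x - 1) 0 :=
  Nat.findGreatest_spec (P := fun h => h ≤ x.getD (h - 1) 0) (Nat.zero_le _) (Nat.zero_le _)

lemma hIdx_mono {x y : List ℕ} (hd : Dom x y) : hIdx x ≤ hIdx y := by
  obtain h0 | hpos := Nat.eq_zero_or_pos (hIdx x)
  · simp [h0]
  · apply Nat.le_findGreatest ((hIdx_le_length x).trans hd.1)
    calc hIdx x ≤ x.getD (hIdx x - 1) 0 := hIdx_le_getD x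
      _ ≤ y.getD (hIdx x - 1) 0 := hd.2 _ (by have := hIdx_le_length x; omega)

lemma hIdx_replicate_self (h : ℕ) : hIdx (List.replicate h h) = h := by
  refine le_antisymm (by simpa using hIdx_le_length (List.replicate h h)) ?_
  obtain h0 | hpos := Nat.eq_zero_or_pos h
  · simp [h0]
  · apply Nat.le_findGreatest (by simp)
    simp [List.getD_eq_getElem?_getD, hpos]

lemma hIdx_le_getD_of_lt {x : List ℕ} (hx : List.Pairwise (· ≥ ·) x) {i : ℕ}
    (hi : i < hIdx x) : hIdx x ≤ x.getD i 0 := by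
  have hlen := hIdx_le_length x
  have hlast : hIdx x - 1 < x.length := by omega
  have hi' : i < x.length := by omega
  calc hIdx x ≤ x.getD (hIdx x - 1) 0 := hIdx_le_getD x
    _ = x[hIdx x - 1] := by simp [List.getD_eq_getElem?_getD, hlast]
    _ ≤ x[i] := hx.rel_get_of_le (a := ⟨i, hi'⟩) (b := ⟨hIdx x - 1, hlast⟩) (by simp; omega)
    _ = x.getD i 0 := by simp [List.getD_eq_getElem?_getD, hi']

lemma citVec_replicate_self (n : ℕ) : CitVec (List.replicate n n) := by
  refine ⟨fun a ha => ?_, List.pairwise_replicate.mpr (Or.inr le_rfl)⟩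
  obtain ⟨hn, rfl⟩ := List.mem_replicate.mp ha
  exact Nat.pos_of_ne_zero hn

lemma uniform_replicate (n a : ℕ) : Uniform (List.replicate n a) := by
  intro b hb c hc
  rw [List.eq_of_mem_replicate hb, List.eq_of_mem_replicate hc]

lemma dom_replicate_hIdx {x : List ℕ} (hx : List.Pairwise (· ≥ ·) x) :
    Dom (List.replicate (hIdx x) (hIdx x)) x := by
  refine ⟨by simpa using hIdx_le_length x, fun i hi => ?_⟩
  rw [List.length_replicate] at hi
  simpa [List.getD_eq_getElem?_getD, List.getElem?_replicate, hi] using hIdx_le_getD_of_lt hx hi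

theorem hsq_M_UE_not_UC :
    (∀ x y, CitVec x → CitVec y → Dom x y → ((hIdx x ^ 2 : ℕ) : ℝ) ≤ (hIdx y ^ 2 : ℕ)) ∧
    (∀ x, CitVec x → ∃ u, CitVec u ∧ Uniform u ∧ Dom u x ∧
      ((hIdx x ^ 2 : ℕ) : ℝ) = (hIdx u ^ 2 : ℕ)) ∧
    ¬ (∀ x, CitVec x → Uniform x → ((hIdx x ^ 2 : ℕ) : ℝ) = x.sum) := by
  refine ⟨fun x y _ _ hd => ?_, fun x hx => ?_, fun huc => ?_⟩
  · exact_mod_cast Nat.pow_le_pow_left (hIdx_mono hd) 2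
  · refine ⟨List.replicate (hIdx x) (hIdx x), citVec_replicate_self _, uniform_replicate _ _,
      dom_replicate_hIdx hx.2, by rw [hIdx_replicate_self]⟩
  · have h3 : hIdx [3] = 1 := by decide
    have := huc [3] ⟨by simp, by simp⟩ (uniform_replicate 1 3)
    norm_num [h3] at this
end

section
/- If x^[k] is obtained from citation vector x by adding one citation to publication k and rec(x^[k]) ≠ rec(x), then rec(x^[k]) − rec(x) ≤ min(k, x_k + 1) ≤ √(rec(x^[k])). -/
/-! Adding a citation to publication `k` only raises the term `k · x_k` of the maximum defining the
rec-index, so `rec(x^[k]) = max (rec x) (k · (x_k + 1))`. When the index moves, the jump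
`k · (x_k + 1) - rec x` is at most `k` because `k · x_k ≤ rec x`, and at most `x_k + 1` because
minimality of `k` gives `x_{k-1} ≥ x_k + 1`, whence `(k - 1) · (x_k + 1) ≤ rec x`. Finally
`min(k, x_k + 1)² ≤ k · (x_k + 1) = rec(x^[k])`. -/

theorem le_recIdx (x : List ℕ) (i : ℕ) : (i + 1) * x.getD i 0 ≤ recIdx x := by
  rcases lt_or_ge i x.length with hi | hi
  · exact List.le_max_of_le (List.mem_map_of_mem (List.mem_range.mpr hi)) le_rfl
  · rw [List.getD_eq_default _ _ hi, mul_zero]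
    exact Nat.zero_le _

theorem recIdx_le_iff {x : List ℕ} {m : ℕ} :
    recIdx x ≤ m ↔ ∀ i, (i + 1) * x.getD i 0 ≤ m := by
  refine ⟨fun h i => (le_recIdx x i).trans h, fun h => List.max_le_of_forall_le _ _ ?_⟩
  simp only [List.mem_map, List.mem_range]
  rintro _ ⟨i, -, rfl⟩
  exact h i

theorem mul_getD_pred_le_recIdx (x : List ℕ) (k : ℕ) : k * x.getD (k - 1) 0 ≤ recIdx x := by
  rcases k with _ | k
  · simp
  · exact le_recIdx x k

theorem getD_incr {x : List ℕ} {k : ℕ} (hk₁ : 1 ≤ k) (hk : k ≤ x.length + 1) (i : ℕ) :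
    (incr x k).getD i 0 = if i = k - 1 then x.getD (k - 1) 0 + 1 else x.getD i 0 := by
  unfold incr
  split_ifs with hkn hi hi
  · subst hi
    simp [show k - 1 < x.length by omega]
  · simp [Ne.symm hi]
  · subst hi
    simp [show k - 1 = x.length by omega]
  · rcases lt_or_ge i x.length with hix | hix
    · exact List.getD_append _ _ _ _ hix
    · rw [List.getD_append_right _ _ _ _ hix, List.getD_eq_default _ _ hix]
      simp [show i - x.length ≠ 0 by omega]

theorem recIdx_incr {x : List ℕ} {k : ℕ} (hk₁ : 1 ≤ k) (hk : k ≤ x.length + 1) :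
    recIdx (incr x k) = max (recIdx x) (k * (x.getD (k - 1) 0 + 1)) := by
  refine le_antisymm (recIdx_le_iff.2 fun i => ?_) (max_le (recIdx_le_iff.2 fun i => ?_) ?_)
  · rw [getD_incr hk₁ hk]
    split_ifs with hi
    · subst hi
      rw [Nat.sub_add_cancel hk₁]
      exact le_max_right _ _
    · exact le_max_of_le_left (le_recIdx x i)
  · refine le_trans (Nat.mul_le_mul_left _ ?_) (le_recIdx _ i)
    rw [getD_incr hk₁ hk]
    split_ifs with hi
    · rw [hi]; exact Nat.le_succ _
    · exact le_rfl
  · have := le_recIdx (incr x k) (k - 1)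
    rwa [getD_incr hk₁ hk, if_pos rfl, Nat.sub_add_cancel hk₁] at this

theorem MinIndex.pred_mul_succ_le_recIdx {x : List ℕ} {k : ℕ} (hk : MinIndex x k) :
    (k - 1) * (x.getD (k - 1) 0 + 1) ≤ recIdx x := by
  obtain ⟨hk₁, hk, hmin⟩ := hk
  rcases Nat.lt_or_ge k 2 with hk2 | hk2
  · simp [show k - 1 = 0 by omega]
  · have hlt := hmin (k - 1) (by omega) (by omega)
    calc (k - 1) * (x.getD (k - 1) 0 + 1) ≤ (k - 1) * x.getD (k - 1 - 1) 0 :=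
          Nat.mul_le_mul_left _ hlt
      _ ≤ recIdx x := mul_getD_pred_le_recIdx x (k - 1)

theorem Nat.mul_succ_sub_le_min {k v m : ℕ} (h₁ : k * v ≤ m) (h₂ : (k - 1) * (v + 1) ≤ m) :
    k * (v + 1) - m ≤ min k (v + 1) := by
  rcases k with _ | k
  · simp
  · have e₁ : (k + 1) * (v + 1) = (k + 1) * v + (k + 1) := by ring
    have e₂ : (k + 1) * (v + 1) = k * (v + 1) + (v + 1) := by ring
    rw [Nat.add_sub_cancel] at h₂
    omega

theorem Nat.min_sq_le_mul (a b : ℕ) : min a b ^ 2 ≤ a * b :=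
  (pow_two _).trans_le (Nat.mul_le_mul (min_le_left a b) (min_le_right a b))

theorem rec_incr_diff_bound_general (x : List ℕ) (k : ℕ)
    (hk : MinIndex x k) (hne : recIdx (incr x k) ≠ recIdx x) :
    recIdx (incr x k) - recIdx x ≤ min k (x.getD (k - 1) 0 + 1) ∧
    ((min k (x.getD (k - 1) 0 + 1) : ℕ) : ℝ) ≤ Real.sqrt (recIdx (incr x k)) := by
  have hjump : recIdx (incr x k) = k * (x.getD (k - 1) 0 + 1) := by
    rw [recIdx_incr hk.1 hk.2.1] at hne ⊢
    exact (max_choice _ _).resolve_left hne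
  rw [hjump]
  refine ⟨Nat.mul_succ_sub_le_min (mul_getD_pred_le_recIdx x k) hk.pred_mul_succ_le_recIdx, ?_⟩
  exact Real.le_sqrt_of_sq_le (by exact_mod_cast Nat.min_sq_le_mul _ _)

theorem rec_incr_diff_bound (x : List ℕ) (k : ℕ) (hx : CitVec x)
    (hk : MinIndex x k) (hne : recIdx (incr x k) ≠ recIdx x) :
    recIdx (incr x k) - recIdx x ≤ min k (x.getD (k - 1) 0 + 1) ∧
    ((min k (x.getD (k - 1) 0 + 1) : ℕ) : ℝ) ≤ Real.sqrt (recIdx (incr x k)) :=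
  rec_incr_diff_bound_general x k hk hne
end
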